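/- For all n ≥ 1 and 1 ≤ k ≤ n, the Lucas polynomial {n} divides the product of lucanomials {n choose k} · {n choose k-1} in the polynomial ring Z[s,t]; in particular the generalized Narayana number N_{n,k} = (1/{n})·{n choose k}·{n choose k-1} is a polynomial in s and t with nonnegative integer coefficients. -/
import Mathlib


open MvPolynomial in
/-- The Lucas polynomials in `ℤ[s,t]`, where `s = X 0` and `t = X 1`:
`{0} = 0`, `{1} = 1`, `{n} = s·{n-1} + t·{n-2}`. -/
noncomputable def lucas : ℕ → MvPolynomial (Fin 2) ℤ
  | 0 => 0
  | 1 => 1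
  | n + 2 => X 0 * lucas (n + 1) + X 1 * lucas n

/-- The Lucas factorial `{n}! = {n}·{n-1}···{1}`, with `{0}! = 1`. -/
noncomputable def lucasFact : ℕ → MvPolynomial (Fin 2) ℤ
  | 0 => 1
  | n + 1 => lucas (n + 1) * lucasFact n

open MvPolynomial

lemma lucas_step (n : ℕ) : lucas (n+2) = X 0 * lucas (n+1) + X 1 * lucas n := rfl

lemma lucas_addition (m n : ℕ) :
    lucas (m + n + 1) = lucas (m+1) * lucas (n+1) + X 1 * lucas m * lucas n := by
  induction m using Nat.twoStepInduction generalizing n with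
  | zero => simp [lucas]
  | one =>
      have e : 1 + n + 1 = n + 2 := by ring
      rw [e, lucas_step]; simp [lucas]
  | more m ih1 ih2 =>
      have e : m + 2 + n + 1 = (m + n + 1) + 2 := by ring
      have e2 : m + 1 + n + 1 = m + n + 1 + 1 := by ring
      rw [e, lucas_step, ih1]
      have := ih2 n
      rw [e2] at this
      have e3 : m + 2 + 1 = (m+1) + 2 := by ring
      rw [this, e3, lucas_step (m+1), lucas_step m]
      ring

noncomputable def binom : ℕ → ℕ → MvPolynomial (Fin 2) ℤ
  | _, 0 => 1
  | 0, _ + 1 => 0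
  | n + 1, k + 1 => lucas (n - k + 1) * binom n k + X 1 * lucas k * binom n (k + 1)

lemma binom_zero (n : ℕ) : binom n 0 = 1 := by cases n <;> rfl

lemma binom_of_lt : ∀ n k : ℕ, n < k → binom n k = 0 := by
  intro n
  induction n with
  | zero => intro k hk; cases k with | zero => omega | succ k => rfl
  | succ n ih =>
      intro k hk
      cases k with
      | zero => omega
      | succ k =>
          show lucas (n - k + 1) * binom n k + X 1 * lucas k * binom n (k + 1) = 0
          rw [ih k (by omega), ih (k+1) (by omega)]
          ring

lemma fact_binom : ∀ n a b : ℕ, a + b = n →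
    lucasFact a * lucasFact b * binom n a = lucasFact n := by
  intro n
  induction n with
  | zero =>
      intro a b h
      obtain ⟨rfl, rfl⟩ : a = 0 ∧ b = 0 := by omega
      simp [binom_zero, lucasFact]
  | succ n ih =>
      intro a b h
      cases a with
      | zero =>
          have hb : b = n + 1 := by omega
          subst hb
          simp [binom_zero, lucasFact]
      | succ a =>
          have hab : a + b = n := by omega
          show lucasFact (a+1) * lucasFact b *
            (lucas (n - a + 1) * binom n a + X 1 * lucas a * binom n (a + 1)) = _
          have hna : n - a = b := by omega
          rw [hna]
          cases b with
          | zero =>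
              have hz : binom n (a+1) = 0 := binom_of_lt _ _ (by omega)
              have ha : a = n := by omega
              rw [ha] at hz ⊢
              rw [hz]
              have h1 : lucasFact n * binom n n = lucasFact n := by
                have h := ih n 0 (by omega)
                simpa [lucasFact] using h
              calc lucasFact (n+1) * lucasFact 0 *
                    (lucas (0 + 1) * binom n n + X 1 * lucas n * 0)
                  = lucas (n+1) * (lucasFact n * binom n n) := by
                    simp only [lucasFact, show lucas (0+1) = 1 from rfl]
                    ring
                _ = lucas (n+1) * lucasFact n := by rw [h1]
                _ = lucasFact (n+1) := rfl
          | succ b =>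
              have h1 := ih a (b+1) hab
              have h2 := ih (a+1) b (by omega)
              have key : lucasFact (a+1) * lucasFact (b+1) *
                  (lucas (b + 1 + 1) * binom n a + X 1 * lucas a * binom n (a + 1))
                  = lucas (a+1) * lucas (b+1+1) * (lucasFact a * lucasFact (b+1) * binom n a)
                    + X 1 * lucas a * lucas (b+1) * (lucasFact (a+1) * lucasFact b * binom n (a+1)) := by
                simp only [lucasFact]; ring
              rw [key, h1, h2]
              have hadd := lucas_addition a (b+1)
              have e : a + (b+1) + 1 = n + 1 := by omega
              rw [e] at hadd
              show _ = lucasFact (n+1)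
              simp only [lucasFact]
              rw [hadd]; ring

def NN (p : MvPolynomial (Fin 2) ℤ) : Prop := ∀ m, 0 ≤ p.coeff m

lemma NN_zero : NN 0 := by intro m; simp
lemma NN_one : NN 1 := by intro m; rw [coeff_one]; split <;> norm_num
lemma NN_X (i : Fin 2) : NN (X i) := by
  intro m; rw [coeff_X']; split <;> norm_num
lemma NN.add {p q} (hp : NN p) (hq : NN q) : NN (p + q) := by
  intro m; rw [coeff_add]; exact add_nonneg (hp m) (hq m)
lemma NN.mul {p q} (hp : NN p) (hq : NN q) : NN (p * q) := by
  intro m; rw [coeff_mul]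
  exact Finset.sum_nonneg fun x _ => mul_nonneg (hp x.1) (hq x.2)

lemma NN_lucas (n : ℕ) : NN (lucas n) := by
  induction n using Nat.twoStepInduction with
  | zero => exact NN_zero
  | one => exact NN_one
  | more n ih1 ih2 =>
      rw [lucas_step]
      exact ((NN_X 0).mul ih2).add (((NN_X 1).mul ih1))

lemma NN_binom : ∀ n k : ℕ, NN (binom n k) := by
  intro n
  induction n with
  | zero => intro k; cases k with
      | zero => exact NN_one
      | succ k => exact NN_zero
  | succ n ih =>
      intro k
      cases k with
      | zero => exact NN_one
      | succ k =>
          show NN (lucas (n - k + 1) * binom n k + X 1 * lucas k * binom n (k + 1))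
          exact ((NN_lucas _).mul (ih k)).add (((NN_X 1).mul (NN_lucas k)).mul (ih (k+1)))

noncomputable def ev : MvPolynomial (Fin 2) ℤ →+* ℤ := eval (fun _ => (1:ℤ))

lemma ev_lucas_pos : ∀ n : ℕ, 0 ≤ ev (lucas n) ∧ (1 ≤ n → 1 ≤ ev (lucas n)) := by
  intro n
  induction n using Nat.twoStepInduction with
  | zero => simp [ev, lucas]
  | one => simp [ev, lucas]
  | more n ih1 ih2 =>
      rw [lucas_step]
      have hX : ∀ i : Fin 2, ev (X i) = 1 := by intro i; simp [ev]
      rw [map_add, map_mul, map_mul, hX, hX, one_mul, one_mul]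
      constructor
      · exact add_nonneg ih2.1 ih1.1
      · intro _
        have := ih2.2 (by omega)
        omega

lemma lucas_ne_zero {n : ℕ} (hn : 1 ≤ n) : lucas n ≠ 0 := by
  intro h
  have := (ev_lucas_pos n).2 hn
  rw [h] at this; simp [ev] at this

lemma lucasFact_ne_zero (n : ℕ) : lucasFact n ≠ 0 := by
  induction n with
  | zero => simp [lucasFact]
  | succ n ih =>
      show lucas (n+1) * lucasFact n ≠ 0
      exact mul_ne_zero (lucas_ne_zero (by omega)) ih

lemma idA (a b : ℕ) :
    lucas (a+1) * binom (a+b+1) (a+1) = lucas (a+b+1) * binom (a+b) a := by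
  apply mul_left_cancel₀ (mul_ne_zero (lucasFact_ne_zero a) (lucasFact_ne_zero b))
  have h1 := fact_binom (a+b+1) (a+1) b (by omega)
  have h2 := fact_binom (a+b) a b rfl
  calc (lucasFact a * lucasFact b) * (lucas (a+1) * binom (a+b+1) (a+1))
      = lucasFact (a+1) * lucasFact b * binom (a+b+1) (a+1) := by
        simp only [lucasFact]; ring
    _ = lucasFact (a+b+1) := h1
    _ = lucas (a+b+1) * lucasFact (a+b) := rfl
    _ = lucas (a+b+1) * (lucasFact a * lucasFact b * binom (a+b) a) := by rw [h2]
    _ = (lucasFact a * lucasFact b) * (lucas (a+b+1) * binom (a+b) a) := by ring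

lemma idB (a b : ℕ) :
    lucas (b+1) * binom (a+b+1) a = lucas (a+b+1) * binom (a+b) a := by
  apply mul_left_cancel₀ (mul_ne_zero (lucasFact_ne_zero a) (lucasFact_ne_zero b))
  have h1 := fact_binom (a+b+1) a (b+1) (by omega)
  have h2 := fact_binom (a+b) a b rfl
  calc (lucasFact a * lucasFact b) * (lucas (b+1) * binom (a+b+1) a)
      = lucasFact a * lucasFact (b+1) * binom (a+b+1) a := by
        simp only [lucasFact]; ring
    _ = lucasFact (a+b+1) := h1
    _ = lucas (a+b+1) * lucasFact (a+b) := rfl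
    _ = lucas (a+b+1) * (lucasFact a * lucasFact b * binom (a+b) a) := by rw [h2]
    _ = (lucasFact a * lucasFact b) * (lucas (a+b+1) * binom (a+b) a) := by ring

lemma idD (a c : ℕ) :
    lucas c * binom (a+c+2) (a+2) = lucas (a+c+2) * binom (a+c+1) (a+2) := by
  cases c with
  | zero =>
      rw [show lucas 0 = 0 from rfl, binom_of_lt (a+0+1) (a+2) (by omega)]
      ring
  | succ c =>
      have := idB (a+2) c
      rw [show a+2+c+1 = a+(c+1)+2 from by omega, show a+2+c = a+(c+1)+1 from by omega] at this
      exact this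

lemma main_id (a c : ℕ) :
    binom (a+c+2) (a+2) * binom (a+c+2) (a+1)
    = lucas (a+c+2) * (binom (a+c+1) (a+1) * binom (a+c+1) (a+1)
        + X 1 * binom (a+c+1) (a+2) * binom (a+c+1) a) := by
  apply mul_left_cancel₀ (lucas_ne_zero (show 1 ≤ a+c+2 by omega))
  have hadd : lucas (a+c+2) = lucas (a+2) * lucas (c+1) + X 1 * lucas (a+1) * lucas c := by
    have := lucas_addition (a+1) c
    rw [show a+1+c+1 = a+c+2 from by omega, show a+1+1 = a+2 from by omega] at this
    exact this
  have hA1 : lucas (a+2) * binom (a+c+2) (a+2) = lucas (a+c+2) * binom (a+c+1) (a+1) := by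
    have := idA (a+1) c
    rw [show a+1+c+1 = a+c+2 from by omega, show a+1+1 = a+2 from by omega,
        show a+1+c = a+c+1 from by omega] at this
    exact this
  have hB1 : lucas (c+1) * binom (a+c+2) (a+1) = lucas (a+c+2) * binom (a+c+1) (a+1) := by
    have := idB (a+1) c
    rw [show a+1+c+1 = a+c+2 from by omega, show a+1+c = a+c+1 from by omega] at this
    exact this
  have hA2 : lucas (a+1) * binom (a+c+2) (a+1) = lucas (a+c+2) * binom (a+c+1) a := by
    have := idA a (c+1)
    rw [show a+(c+1)+1 = a+c+2 from by omega, show a+(c+1) = a+c+1 from by omega] at this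
    exact this
  have hD := idD a c
  calc lucas (a+c+2) * (binom (a+c+2) (a+2) * binom (a+c+2) (a+1))
      = (lucas (a+2) * binom (a+c+2) (a+2)) * (lucas (c+1) * binom (a+c+2) (a+1))
        + X 1 * ((lucas (a+1) * binom (a+c+2) (a+1)) * (lucas c * binom (a+c+2) (a+2))) := by
        rw [hadd]; ring
    _ = (lucas (a+c+2) * binom (a+c+1) (a+1)) * (lucas (a+c+2) * binom (a+c+1) (a+1))
        + X 1 * ((lucas (a+c+2) * binom (a+c+1) a) * (lucas (a+c+2) * binom (a+c+1) (a+2))) := by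
        rw [hA1, hB1, hA2, hD]
    _ = lucas (a+c+2) * (lucas (a+c+2) * (binom (a+c+1) (a+1) * binom (a+c+1) (a+1)
        + X 1 * binom (a+c+1) (a+2) * binom (a+c+1) a)) := by ring

lemma binom_one (n : ℕ) : binom n 1 = lucas n := by
  cases n with
  | zero => rfl
  | succ n =>
      show lucas (n - 0 + 1) * binom n 0 + X 1 * lucas 0 * binom n 1 = lucas (n+1)
      rw [binom_zero, show lucas 0 = 0 from rfl, Nat.sub_zero]
      ring

lemma nat_main (a b : ℕ) (h1 : 1 ≤ a) (h2 : a ≤ b) :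
    ∃ N : MvPolynomial (Fin 2) ℤ,
      binom b a * binom b (a-1) = lucas b * N ∧ ∀ m, 0 ≤ N.coeff m := by
  rcases Nat.lt_or_ge a 2 with h | h
  · obtain rfl : a = 1 := by omega
    refine ⟨1, ?_, fun m => NN_one m⟩
    rw [binom_one, show (1:ℕ) - 1 = 0 from rfl, binom_zero, mul_one]
  · obtain ⟨a', rfl⟩ : ∃ a', a = a' + 2 := ⟨a - 2, by omega⟩
    obtain ⟨c, rfl⟩ : ∃ c, b = a' + c + 2 := ⟨b - (a' + 2), by omega⟩
    refine ⟨binom (a'+c+1) (a'+1) * binom (a'+c+1) (a'+1)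
        + X 1 * binom (a'+c+1) (a'+2) * binom (a'+c+1) a', ?_, ?_⟩
    · have := main_id a' c
      rw [show a'+2-1 = a'+1 from by omega]
      exact this
    · intro m
      exact (((NN_binom _ _).mul (NN_binom _ _)).add
        (((NN_X 1).mul (NN_binom _ _)).mul (NN_binom _ _))) m


/-- The Lucas polynomial `{n}` divides `{n choose k} · {n choose k-1}` in `ℤ[s,t]`,
and the quotient (the generalized Narayana number) has nonnegative integer coefficients.
`L` is any function satisfying the defining property of the lucanomial coefficients. -/
theorem lucas_dvd_narayana
    (L : ℤ → ℤ → MvPolynomial (Fin 2) ℤ)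
    (hL : ∀ n k : ℤ, 0 ≤ k → k ≤ n →
      lucasFact k.toNat * lucasFact (n - k).toNat * L n k = lucasFact n.toNat)
    (hL0 : ∀ n k : ℤ, ¬(0 ≤ k ∧ k ≤ n) → L n k = 0)
    (n k : ℤ) (hn : 1 ≤ n) (hk : 1 ≤ k) (hkn : k ≤ n) :
    ∃ N : MvPolynomial (Fin 2) ℤ,
      L n k * L n (k - 1) = lucas n.toNat * N ∧ ∀ m, 0 ≤ N.coeff m := by
  have L_eq : ∀ k' : ℤ, 0 ≤ k' → k' ≤ n → L n k' = binom n.toNat k'.toNat := by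
    intro k' h0 h1
    have h := hL n k' h0 h1
    have hsub : (n - k').toNat = n.toNat - k'.toNat := by omega
    rw [hsub] at h
    have hb := fact_binom n.toNat k'.toNat (n.toNat - k'.toNat) (by omega)
    apply mul_left_cancel₀
      (mul_ne_zero (lucasFact_ne_zero k'.toNat) (lucasFact_ne_zero (n.toNat - k'.toNat)))
    rw [h, hb]
  rw [L_eq k (by omega) hkn, L_eq (k-1) (by omega) (by omega),
      show (k-1).toNat = k.toNat - 1 from by omega]
  exact nat_main k.toNat n.toNat (by omega) (by omega)
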